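/- arXiv:math/0412436 — 3 statements merged into one kernel-verified Lean document; each statement's English description precedes it below -/
import Mathlib

section
/- Let f : ℝⁿ → ℝ be smooth and positive, let l ∈ ℕ, and let r_i, a_i ∈ ℝ for i = 1,…,l. Set ζ = ∑ᵢ rᵢaᵢ and η = ∑ᵢ rᵢaᵢ². Then ∑ᵢ rᵢ * Δ(f^{aᵢ})/f^{aᵢ} = (η - ζ) * ‖∇f‖²/f² + ζ * Δf/f, where Δ is the Euclidean Laplacian. -/
noncomputable def pd {n : ℕ} (i : Fin n) (g : (Fin n → ℝ) → ℝ) (x : Fin n → ℝ) : ℝ :=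
  fderiv ℝ g x (Pi.single i 1)

section aux
variable {n : ℕ} {f : (Fin n → ℝ) → ℝ}

lemma pd_smooth (hf : ContDiff ℝ (⊤ : ℕ∞) f) (j : Fin n) : ContDiff ℝ (⊤ : ℕ∞) (pd j f) := by
  have h1 : ContDiff ℝ (⊤ : ℕ∞) (fderiv ℝ f) := hf.fderiv_right le_rfl
  exact (ContinuousLinearMap.apply ℝ ℝ (Pi.single j 1 : Fin n → ℝ)).contDiff.comp h1

lemma pd_rpow (hf : ContDiff ℝ (⊤ : ℕ∞) f) (hpos : ∀ x, 0 < f x) (c : ℝ) (j : Fin n) (x : Fin n → ℝ) :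
    pd j (fun y => f y ^ c) x = c * f x ^ (c - 1) * pd j f x := by
  have hd : HasFDerivAt f (fderiv ℝ f x) x :=
    (hf.differentiable (by simp) x).hasFDerivAt
  have h2 := hd.rpow_const (p := c) (Or.inl (hpos x).ne')
  rw [pd, h2.fderiv]
  simp [pd, mul_comm]

lemma pd_mul (hg : ContDiff ℝ (⊤ : ℕ∞) (fun y => f y)) (h : (Fin n → ℝ) → ℝ)
    (hh : ContDiff ℝ (⊤ : ℕ∞) h) (j : Fin n) (x : Fin n → ℝ) :
    pd j (fun y => f y * h y) x = pd j f x * h x + f x * pd j h x := by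
  have h1 : HasFDerivAt f (fderiv ℝ f x) x := (hg.differentiable (by simp) x).hasFDerivAt
  have h2 : HasFDerivAt h (fderiv ℝ h x) x := (hh.differentiable (by simp) x).hasFDerivAt
  have h3 := h1.mul h2
  rw [pd, show (fun y => f y * h y) = f * h from rfl, h3.fderiv]
  simp [pd]
  ring

end aux

theorem stmt2 {n : ℕ} (f : (Fin n → ℝ) → ℝ) (hf : ContDiff ℝ (⊤ : ℕ∞) f)
    (hpos : ∀ x, 0 < f x) (l : ℕ) (r a : Fin l → ℝ) :
    ∀ x, (∑ i, r i * ((∑ j, pd j (pd j (fun y => f y ^ a i)) x) / f x ^ a i)) =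
      ((∑ i, r i * a i ^ 2) - (∑ i, r i * a i)) * (∑ j, (pd j f x) ^ 2) / f x ^ 2 +
        (∑ i, r i * a i) * (∑ j, pd j (pd j f) x) / f x := by
  intro x
  set A : ℝ := (∑ j, (pd j f x) ^ 2) / f x ^ 2 with hA
  set B : ℝ := (∑ j, pd j (pd j f) x) / f x with hB
  have hfx := hpos x
  -- second derivative of f ^ c
  have key : ∀ (c : ℝ) (j : Fin n),
      pd j (pd j (fun y => f y ^ c)) x
        = c * (c - 1) * f x ^ (c - 2) * (pd j f x) ^ 2 + c * f x ^ (c - 1) * pd j (pd j f) x := by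
    intro c j
    have hrw : pd j (fun y => f y ^ c) = fun y => (fun y => f y ^ (c - 1)) y * (fun y => c * pd j f y) y := by
      funext y
      rw [pd_rpow hf hpos c j y]
      ring
    have hgc : ContDiff ℝ (⊤ : ℕ∞) (fun y => f y ^ (c - 1)) :=
      hf.rpow_const_of_ne (fun y => (hpos y).ne')
    have hhc : ContDiff ℝ (⊤ : ℕ∞) (fun y => c * pd j f y) :=
      (contDiff_const).mul (pd_smooth hf j)
    rw [hrw, pd_mul hgc _ hhc j x, pd_rpow hf hpos (c - 1) j x]
    have hpdc : pd j (fun y => c * pd j f y) x = c * pd j (pd j f) x := by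
      have h2 : HasFDerivAt (pd j f) (fderiv ℝ (pd j f) x) x :=
        ((pd_smooth hf j).differentiable (by simp) x).hasFDerivAt
      have := h2.const_mul c
      rw [pd, this.fderiv]
      simp [pd]
    rw [hpdc]
    ring
  -- per-i computation
  have per : ∀ i : Fin l,
      (∑ j, pd j (pd j (fun y => f y ^ a i)) x) / f x ^ a i
        = (a i ^ 2 - a i) * A + a i * B := by
    intro i
    have hsum : (∑ j, pd j (pd j (fun y => f y ^ a i)) x)
        = a i * (a i - 1) * f x ^ (a i - 2) * (∑ j, (pd j f x) ^ 2)
          + a i * f x ^ (a i - 1) * (∑ j, pd j (pd j f) x) := by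
      rw [Finset.mul_sum, Finset.mul_sum, ← Finset.sum_add_distrib]
      exact Finset.sum_congr rfl fun j _ => key (a i) j
    rw [hsum, hA, hB]
    have hfa : f x ^ a i ≠ 0 := (Real.rpow_pos_of_pos hfx _).ne'
    have e1 : f x ^ (a i - 2) * f x ^ 2 = f x ^ a i := by
      rw [← Real.rpow_two, ← Real.rpow_add hfx]; ring_nf
    have e2 : f x ^ (a i - 1) * f x = f x ^ a i := by
      nth_rewrite 2 [← Real.rpow_one (f x)]
      rw [← Real.rpow_add hfx]; ring_nf
    field_simp
    linear_combination (a i * (a i - 1) * (∑ j, (pd j f x) ^ 2)) * e1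
      + (a i * (∑ j, pd j (pd j f) x) * f x) * e2
  calc (∑ i, r i * ((∑ j, pd j (pd j (fun y => f y ^ a i)) x) / f x ^ a i))
      = ∑ i, (r i * (a i ^ 2 - a i) * A + r i * a i * B) := by
        refine Finset.sum_congr rfl fun i _ => ?_
        rw [per i]; ring
    _ = ((∑ i, r i * a i ^ 2) - (∑ i, r i * a i)) * A + (∑ i, r i * a i) * B := by
        rw [Finset.sum_add_distrib, ← Finset.sum_mul, ← Finset.sum_mul]
        have : (∑ i, r i * (a i ^ 2 - a i)) = (∑ i, r i * a i ^ 2) - (∑ i, r i * a i) := by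
          rw [← Finset.sum_sub_distrib]
          exact Finset.sum_congr rfl fun i _ => by ring
        rw [this]
    _ = _ := by rw [hA, hB]; ring
end

section
/- Let v : ℝ → ℝ be smooth and positive, r₁, r₂, a₁, a₂ ∈ ℝ with r₁a₁ + r₂a₂ ≠ 0 and r₁a₁² + r₂a₂² ≠ 0. Set α = (r₁a₁ + r₂a₂)/(r₁a₁² + r₂a₂²) and β = (r₁a₁ + r₂a₂)²/(r₁a₁² + r₂a₂²), and let u = v^{1/α}. Then r₁ * (v^{a₁})''/v^{a₁} + r₂ * (v^{a₂})''/v^{a₂} = β * u''/u. -/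
lemma second_deriv_rpow (v : ℝ → ℝ) (hv : ContDiff ℝ (⊤ : ℕ∞) v) (hpos : ∀ x, 0 < v x)
    (a x : ℝ) :
    deriv (deriv (fun y => v y ^ a)) x
      = a * (a - 1) * v x ^ (a - 2) * (deriv v x) ^ 2
        + a * v x ^ (a - 1) * deriv (deriv v) x := by
  have hd : Differentiable ℝ v := (hv.of_le (m := 1) (by exact_mod_cast le_top)).differentiable (by exact one_ne_zero)
  have hd2 : Differentiable ℝ (deriv v) :=
    ((hv.of_le (by simp)).iterate_deriv 1).differentiable (by simp)
  have h1 : deriv (fun y => v y ^ a) = fun y => deriv v y * a * v y ^ (a - 1) :=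
    funext fun y => ((hd y).hasDerivAt.rpow_const (Or.inl (hpos y).ne')).deriv
  rw [h1]
  have h2 : HasDerivAt (fun y => deriv v y * a * v y ^ (a - 1))
      ((deriv (deriv v) x * a) * v x ^ (a - 1)
        + (deriv v x * a) * (deriv v x * (a - 1) * v x ^ (a - 1 - 1))) x :=
    HasDerivAt.mul ((hd2 x).hasDerivAt.mul_const a)
      ((hd x).hasDerivAt.rpow_const (Or.inl (hpos x).ne'))
  rw [h2.deriv]
  have : a - 1 - 1 = a - 2 := by ring
  rw [this]; ring

theorem stmt4 (v : ℝ → ℝ) (hv : ContDiff ℝ (⊤ : ℕ∞) v) (hpos : ∀ x, 0 < v x)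
    (r₁ r₂ a₁ a₂ : ℝ) (hζ : r₁ * a₁ + r₂ * a₂ ≠ 0) (hη : r₁ * a₁ ^ 2 + r₂ * a₂ ^ 2 ≠ 0) :
    let α : ℝ := (r₁ * a₁ + r₂ * a₂) / (r₁ * a₁ ^ 2 + r₂ * a₂ ^ 2)
    let β : ℝ := (r₁ * a₁ + r₂ * a₂) ^ 2 / (r₁ * a₁ ^ 2 + r₂ * a₂ ^ 2)
    let u : ℝ → ℝ := fun x => v x ^ (1 / α)
    ∀ x, r₁ * deriv (deriv (fun y => v y ^ a₁)) x / v x ^ a₁ +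
        r₂ * deriv (deriv (fun y => v y ^ a₂)) x / v x ^ a₂ =
      β * deriv (deriv u) x / u x := by
  intro α β u x
  set ζ := r₁ * a₁ + r₂ * a₂ with hζdef
  set η := r₁ * a₁ ^ 2 + r₂ * a₂ ^ 2 with hηdef
  have hcα : 1 / α = η / ζ := one_div_div ζ η
  have hu : u = fun x => v x ^ (η / ζ) := by
    funext y; simp only [u, hcα]
  rw [hu]
  rw [second_deriv_rpow v hv hpos a₁ x, second_deriv_rpow v hv hpos a₂ x,
    second_deriv_rpow v hv hpos (η / ζ) x]
  have hvx := hpos x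
  have hsub : ∀ a : ℝ, v x ^ (a - 2) = v x ^ a / (v x * v x) := by
    intro a
    rw [Real.rpow_sub hvx, show (2:ℝ) = 1 + 1 by norm_num, Real.rpow_add hvx, Real.rpow_one]
  have hsub1 : ∀ a : ℝ, v x ^ (a - 1) = v x ^ a / v x := by
    intro a
    rw [Real.rpow_sub hvx, Real.rpow_one]
  rw [hsub, hsub, hsub, hsub1, hsub1, hsub1]
  have h1 : v x ^ a₁ ≠ 0 := (Real.rpow_pos_of_pos hvx _).ne'
  have h2 : v x ^ a₂ ≠ 0 := (Real.rpow_pos_of_pos hvx _).ne'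
  have h3 : v x ^ (η / ζ) ≠ 0 := (Real.rpow_pos_of_pos hvx _).ne'
  have h0 : v x ≠ 0 := hvx.ne'
  simp only [β, ← hζdef, ← hηdef]
  field_simp
  ring
end

section
/- Let m ≥ 3 and k ≥ 1 be integers and μ ∈ ℝ with μ ≠ -k/(m-1). With α as above and q = 2(μ-1)α + 1, one has q > (m+2)/(m-2) if and only if μ < -k/(m-2), and q = (m+2)/(m-2) if and only if μ = -k/(m-2). -/
/-!
Clearing denominators gives
`q - (m+2)/(m-2) = -4 (k+m-1) ((m-2)μ + k) / ((m-2) η)`,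
and `η > 0` because `(m-1) η = (m-2) ((m-1)μ + k)² + k (k+m-1)`.
So `q - (m+2)/(m-2)` has the sign of `-((m-2)μ + k)`.
-/

section

variable {M K μ : ℝ}

lemma eta_pos (hM : 2 < M) (hK : 0 < K) :
    0 < (M - 1) * (M - 2) * μ ^ 2 + 2 * (M - 2) * K * μ + (K + 1) * K := by
  have hsq : (M - 1) * ((M - 1) * (M - 2) * μ ^ 2 + 2 * (M - 2) * K * μ + (K + 1) * K) =
      (M - 2) * ((M - 1) * μ + K) ^ 2 + K * (K + M - 1) := by ring
  have hprod : 0 < (M - 1) * ((M - 1) * (M - 2) * μ ^ 2 + 2 * (M - 2) * K * μ + (K + 1) * K) := by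
    rw [hsq]
    exact add_pos_of_nonneg_of_pos (mul_nonneg (by linarith) (sq_nonneg _))
      (mul_pos hK (by linarith))
  exact pos_of_mul_pos_right hprod (by linarith)

lemma exponent_sub_critical_eq {η : ℝ} (hM : M - 2 ≠ 0)
    (hη : η = (M - 1) * (M - 2) * μ ^ 2 + 2 * (M - 2) * K * μ + (K + 1) * K) (hη0 : η ≠ 0) :
    2 * (μ - 1) * (2 * (K + (M - 1) * μ) / η) + 1 - (M + 2) / (M - 2) =
      -((M - 2) * μ + K) * (4 * (K + M - 1) / ((M - 2) * η)) := by
  field_simp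
  rw [hη]
  ring

end

theorem stmt12_general (m k : ℕ) (hm : 3 ≤ m) (hk : 1 ≤ k) (μ : ℝ) :
    let η : ℝ := ((m : ℝ) - 1) * ((m : ℝ) - 2) * μ ^ 2 +
      2 * ((m : ℝ) - 2) * (k : ℝ) * μ + ((k : ℝ) + 1) * (k : ℝ)
    let α : ℝ := 2 * ((k : ℝ) + ((m : ℝ) - 1) * μ) / η
    let q : ℝ := 2 * (μ - 1) * α + 1
    (q > ((m : ℝ) + 2) / ((m : ℝ) - 2) ↔ μ < -(k : ℝ) / ((m : ℝ) - 2)) ∧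
      (q = ((m : ℝ) + 2) / ((m : ℝ) - 2) ↔ μ = -(k : ℝ) / ((m : ℝ) - 2)) := by
  intro η α q
  have hM : (2 : ℝ) < m := by exact_mod_cast hm
  have hK : (0 : ℝ) < k := by exact_mod_cast hk
  have hM2 : (0 : ℝ) < m - 2 := by linarith
  have hη : 0 < η := eta_pos hM hK
  have hgap := exponent_sub_critical_eq hM2.ne' rfl hη.ne'
  have hr : 0 < 4 * ((k : ℝ) + m - 1) / ((m - 2) * η) := by
    have : (0 : ℝ) < k + m - 1 := by linarith
    positivity
  constructor
  · rw [gt_iff_lt, ← sub_pos, hgap, mul_pos_iff_of_pos_right hr, lt_div_iff₀ hM2]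
    constructor <;> intro h <;> linarith
  · rw [← sub_eq_zero, hgap, mul_eq_zero_iff_right hr.ne', eq_div_iff hM2.ne']
    constructor <;> intro h <;> linarith

theorem stmt12 (m k : ℕ) (hm : 3 ≤ m) (hk : 1 ≤ k) (μ : ℝ)
    (hμ : μ ≠ -(k : ℝ) / ((m : ℝ) - 1)) :
    let η : ℝ := ((m : ℝ) - 1) * ((m : ℝ) - 2) * μ ^ 2 +
      2 * ((m : ℝ) - 2) * (k : ℝ) * μ + ((k : ℝ) + 1) * (k : ℝ)
    let α : ℝ := 2 * ((k : ℝ) + ((m : ℝ) - 1) * μ) / η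
    let q : ℝ := 2 * (μ - 1) * α + 1
    (q > ((m : ℝ) + 2) / ((m : ℝ) - 2) ↔ μ < -(k : ℝ) / ((m : ℝ) - 2)) ∧
      (q = ((m : ℝ) + 2) / ((m : ℝ) - 2) ↔ μ = -(k : ℝ) / ((m : ℝ) - 2)) :=
  stmt12_general m k hm hk μ
end
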